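/- arXiv:1009.2998 — 3 statements merged into one kernel-verified Lean document; each statement's English description precedes it below -/
import Mathlib

section
/- Let G ⊂ ℝ² be an open set and N : G → ℝ a continuously differentiable function such that the function H(x,y) = ∂ₓN(x,y)·P(x,y) + ∂ᵧN(x,y)·Q(x,y) is strictly positive on G. Then the planar system x' = P(x,y), y' = Q(x,y) has no nonconstant periodic solutions with trajectory contained in G. -/
/-! Along a solution `(x, y)` of `x' = P, y' = Q`, the chain rule makes `H(x t, y t)` the derivative
of `N(x t, y t)`; since `H > 0` on `G`, the function `t ↦ N(x t, y t)` is strictly increasing, hence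
injective, so it cannot be periodic — but it would be if the solution were. -/

theorem ContinuousLinearMap.apply_prod_eq (L : ℝ × ℝ →L[ℝ] ℝ) (a b : ℝ) :
    L (a, b) = L (1, 0) * a + L (0, 1) * b := by
  have hab : ((a, b) : ℝ × ℝ) = a • ((1 : ℝ), (0 : ℝ)) + b • ((0 : ℝ), (1 : ℝ)) := by
    simp
  rw [hab, map_add, map_smul, map_smul, smul_eq_mul, smul_eq_mul, mul_comm a, mul_comm b]

theorem DifferentiableAt.hasDerivAt_comp_prodMk {N : ℝ × ℝ → ℝ} {x y : ℝ → ℝ} {x' y' t : ℝ}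
    (hN : DifferentiableAt ℝ N (x t, y t)) (hx : HasDerivAt x x' t) (hy : HasDerivAt y y' t) :
    HasDerivAt (fun s => N (x s, y s))
      (fderiv ℝ N (x t, y t) (1, 0) * x' + fderiv ℝ N (x t, y t) (0, 1) * y') t := by
  rw [← ContinuousLinearMap.apply_prod_eq]
  exact hN.hasFDerivAt.comp_hasDerivAt t (hx.prodMk hy)

theorem strictMono_comp_solution_of_pos {G : Set (ℝ × ℝ)} (hG : IsOpen G) {P Q N : ℝ × ℝ → ℝ}
    (hN : DifferentiableOn ℝ N G)
    (hH : ∀ p ∈ G, 0 < fderiv ℝ N p (1, 0) * P p + fderiv ℝ N p (0, 1) * Q p)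
    {x y : ℝ → ℝ} (hmem : ∀ t, (x t, y t) ∈ G)
    (hx : ∀ t, HasDerivAt x (P (x t, y t)) t) (hy : ∀ t, HasDerivAt y (Q (x t, y t)) t) :
    StrictMono fun t => N (x t, y t) :=
  strictMono_of_hasDerivAt_pos
    (fun t => (hN.differentiableAt (hG.mem_nhds (hmem t))).hasDerivAt_comp_prodMk (hx t) (hy t))
    (fun t => hH _ (hmem t))

theorem poincare_test_no_periodic_general
    (G : Set (ℝ × ℝ)) (hG : IsOpen G)
    (P Q N : ℝ × ℝ → ℝ)
    (hN : ContDiffOn ℝ 1 N G)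
    (hH : ∀ p ∈ G, 0 < fderiv ℝ N p (1, 0) * P p + fderiv ℝ N p (0, 1) * Q p) :
    ¬ ∃ (x y : ℝ → ℝ) (T : ℝ), 0 < T ∧
      (∀ t, (x t, y t) ∈ G) ∧
      (∀ t, HasDerivAt x (P (x t, y t)) t) ∧
      (∀ t, HasDerivAt y (Q (x t, y t)) t) ∧
      (∀ t, (x (t + T), y (t + T)) = (x t, y t)) ∧
      (∃ t s, (x t, y t) ≠ (x s, y s)) := by
  rintro ⟨x, y, T, hT, hmem, hx, hy, hper, -⟩
  have hmono : StrictMono fun t => N (x t, y t) :=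
    strictMono_comp_solution_of_pos hG (hN.differentiableOn one_ne_zero) hH hmem hx hy
  have hperiodic : Function.Periodic (fun t => N (x t, y t)) T := fun t => congrArg N (hper t)
  exact hperiodic.not_injective hT.ne' hmono.injective

/-- Poincaré test: if H = ∂ₓN·P + ∂ᵧN·Q is strictly positive on an open set G,
the planar system x' = P, y' = Q has no nonconstant periodic solutions in G. -/
theorem poincare_test_no_periodic
    (G : Set (ℝ × ℝ)) (hG : IsOpen G)
    (P Q N : ℝ × ℝ → ℝ)
    (hP : ContDiffOn ℝ 1 P G) (hQ : ContDiffOn ℝ 1 Q G)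
    (hN : ContDiffOn ℝ 1 N G)
    (hH : ∀ p ∈ G, 0 < fderiv ℝ N p (1, 0) * P p + fderiv ℝ N p (0, 1) * Q p) :
    ¬ ∃ (x y : ℝ → ℝ) (T : ℝ), 0 < T ∧
      (∀ t, (x t, y t) ∈ G) ∧
      (∀ t, HasDerivAt x (P (x t, y t)) t) ∧
      (∀ t, HasDerivAt y (Q (x t, y t)) t) ∧
      (∀ t, (x (t + T), y (t + T)) = (x t, y t)) ∧
      (∃ t s, (x t, y t) ≠ (x s, y s)) :=
  poincare_test_no_periodic_general G hG P Q N hN hH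
end

section
/- For the vector field f(x) = (−x₁ − x₂ + x₁g(x), x₁ − x₂ + x₂g(x), −x₃ − x₄ + x₃g(x), x₃ − x₄ + x₄g(x)) on ℝ⁴, with g(x) = x₁² + x₂² + x₃² + x₄², and the function μ(x) = g(x)^{−3} on G' = ℝ⁴ ∖ {0}, the divergence of the vector field M(x) = μ(x)f(x) equals 2/(x₁² + x₂² + x₃² + x₄²)³ > 0 for all x ∈ G'. -/
/-!
Write `g x = x ⬝ᵥ x` and `f x = A x + g(x) x`, where `A` is the block matrix of two planar stable
foci, so `tr A = -4` and `⟨x, A x⟩ = -g(x)`. The product rule `div (μ F) = μ div F + Dμ(F)` with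
`μ = g⁻ᵏ` on `ℝⁿ` gives
`div (g⁻ᵏ f) = g⁻ᵏ (tr A + (n + 2) g) - 2k g⁻ᵏ⁻¹ (⟨x, A x⟩ + g²)`.
For `n = 4`, `k = 3` the `g⁻²` terms cancel and `-4 g⁻³ + 6 g⁻³ = 2 g⁻³` is left.
-/

open Finset Matrix

theorem hasDerivAt_inv_pow (k : ℕ) {t : ℝ} (ht : t ≠ 0) :
    HasDerivAt (fun s : ℝ => s⁻¹ ^ k) (-(k * t⁻¹ ^ (k + 1))) t := by
  refine ((hasDerivAt_inv ht).fun_pow k).congr_deriv ?_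
  rcases k with _ | k
  · simp
  · simp only [Nat.add_sub_cancel, inv_pow]
    field_simp
    ring

section DotProduct

variable {ι : Type*} [Fintype ι]

theorem hasFDerivAt_dotProduct_self (x : ι → ℝ) :
    HasFDerivAt (fun y => y ⬝ᵥ y)
      (∑ i, (2 * x i) • ContinuousLinearMap.proj i : (ι → ℝ) →L[ℝ] ℝ) x := by
  have hproj : ∀ i, HasFDerivAt (fun y : ι → ℝ => y i)
      (ContinuousLinearMap.proj i : (ι → ℝ) →L[ℝ] ℝ) x := fun i => hasFDerivAt_apply i x
  refine (HasFDerivAt.fun_sum (u := univ) fun i _ => (hproj i).fun_mul (hproj i)).congr_fderiv ?_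
  simp only [mul_smul, two_smul]

theorem fderiv_dotProduct_self_apply (x v : ι → ℝ) :
    fderiv ℝ (fun y => y ⬝ᵥ y) x v = 2 * (x ⬝ᵥ v) := by
  rw [(hasFDerivAt_dotProduct_self x).fderiv]
  simp [dotProduct, mul_sum, mul_assoc]

theorem fderiv_inv_dotProduct_self_pow_apply (k : ℕ) {x : ι → ℝ} (hx : x ≠ 0) (v : ι → ℝ) :
    fderiv ℝ (fun y => (y ⬝ᵥ y)⁻¹ ^ k) x v = -(2 * k * (x ⬝ᵥ x)⁻¹ ^ (k + 1) * (x ⬝ᵥ v)) := by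
  have hxx : x ⬝ᵥ x ≠ 0 := dotProduct_self_eq_zero.not.mpr hx
  have h : HasFDerivAt (fun y => (y ⬝ᵥ y)⁻¹ ^ k) _ x :=
    (hasDerivAt_inv_pow k hxx).comp_hasFDerivAt (f := fun y : ι → ℝ => y ⬝ᵥ y) x
      (hasFDerivAt_dotProduct_self x)
  rw [h.fderiv, _root_.smul_apply, ← (hasFDerivAt_dotProduct_self x).fderiv,
    fderiv_dotProduct_self_apply, smul_eq_mul]
  ring

theorem hasFDerivAt_mulVec_apply (A : Matrix ι ι ℝ) (x : ι → ℝ) (i : ι) :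
    HasFDerivAt (fun y => (A *ᵥ y) i)
      (∑ j, A i j • ContinuousLinearMap.proj j : (ι → ℝ) →L[ℝ] ℝ) x :=
  HasFDerivAt.fun_sum fun j _ => (hasFDerivAt_apply j x).const_mul (A i j)

theorem differentiableAt_mulVec (A : Matrix ι ι ℝ) (x : ι → ℝ) :
    DifferentiableAt ℝ (fun y => A *ᵥ y) x :=
  differentiableAt_pi.2 fun i => (hasFDerivAt_mulVec_apply A x i).differentiableAt

end DotProduct

section Divergence

variable {ι : Type*} [Fintype ι] [DecidableEq ι]

noncomputable def divergence (F : (ι → ℝ) → ι → ℝ) (x : ι → ℝ) : ℝ :=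
  ∑ i, fderiv ℝ (fun y => F y i) x (Pi.single i 1)

theorem divergence_add {F G : (ι → ℝ) → ι → ℝ} {x : ι → ℝ}
    (hF : DifferentiableAt ℝ F x) (hG : DifferentiableAt ℝ G x) :
    divergence (fun y => F y + G y) x = divergence F x + divergence G x := by
  rw [differentiableAt_pi] at hF hG
  simp only [divergence, Pi.add_apply, fderiv_fun_add (hF _) (hG _), _root_.add_apply,
    sum_add_distrib]

theorem divergence_smul {μ : (ι → ℝ) → ℝ} {F : (ι → ℝ) → ι → ℝ} {x : ι → ℝ}
    (hμ : DifferentiableAt ℝ μ x) (hF : DifferentiableAt ℝ F x) :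
    divergence (fun y => μ y • F y) x = μ x * divergence F x + fderiv ℝ μ x (F x) := by
  rw [differentiableAt_pi] at hF
  have hF_sum : F x = ∑ i, F x i • Pi.single i (1 : ℝ) := by
    simp_rw [← Pi.single_smul', smul_eq_mul, mul_one, univ_sum_single]
  conv_rhs => rw [hF_sum]
  simp only [divergence, Pi.smul_apply, smul_eq_mul, fderiv_fun_mul hμ (hF _), _root_.add_apply,
    _root_.smul_apply, map_sum, map_smul, sum_add_distrib, mul_sum]

theorem divergence_mulVec (A : Matrix ι ι ℝ) (x : ι → ℝ) :
    divergence (fun y => A *ᵥ y) x = A.trace := by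
  simp [divergence, (hasFDerivAt_mulVec_apply A x _).fderiv, trace, Pi.single_apply]

theorem divergence_id (x : ι → ℝ) : divergence (fun y => y) x = Fintype.card ι := by
  simp [divergence, fderiv_apply]

theorem divergence_inv_dotProduct_self_pow_smul (A : Matrix ι ι ℝ) (k : ℕ) {x : ι → ℝ}
    (hx : x ≠ 0) :
    divergence (fun y => (y ⬝ᵥ y)⁻¹ ^ k • (A *ᵥ y + (y ⬝ᵥ y) • y)) x =
      (x ⬝ᵥ x)⁻¹ ^ k * (A.trace + (Fintype.card ι + 2) * (x ⬝ᵥ x)) -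
        2 * k * (x ⬝ᵥ x)⁻¹ ^ (k + 1) * (x ⬝ᵥ (A *ᵥ x) + (x ⬝ᵥ x) ^ 2) := by
  have hdot : DifferentiableAt ℝ (fun y : ι → ℝ => y ⬝ᵥ y) x :=
    (hasFDerivAt_dotProduct_self x).differentiableAt
  have hweight : DifferentiableAt ℝ (fun y : ι → ℝ => (y ⬝ᵥ y)⁻¹ ^ k) x :=
    (hdot.inv (dotProduct_self_eq_zero.not.mpr hx)).pow k
  have hradial : DifferentiableAt ℝ (fun y : ι → ℝ => (y ⬝ᵥ y) • y) x :=
    hdot.smul differentiableAt_fun_id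
  rw [divergence_smul hweight ((differentiableAt_mulVec A x).fun_add hradial),
    divergence_add (differentiableAt_mulVec A x) hradial, divergence_mulVec,
    divergence_smul hdot differentiableAt_fun_id, divergence_id, fderiv_dotProduct_self_apply,
    fderiv_inv_dotProduct_self_pow_apply k hx, dotProduct_add, dotProduct_smul, smul_eq_mul]
  ring

end Divergence

def spiralMatrix : Matrix (Fin 4) (Fin 4) ℝ :=
  !![-1, -1, 0, 0; 1, -1, 0, 0; 0, 0, -1, -1; 0, 0, 1, -1]

theorem trace_spiralMatrix : spiralMatrix.trace = -4 := by
  simp [spiralMatrix, trace, Fin.sum_univ_four]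
  norm_num

theorem dotProduct_spiralMatrix_mulVec (x : Fin 4 → ℝ) :
    x ⬝ᵥ (spiralMatrix *ᵥ x) = -(x ⬝ᵥ x) := by
  simp [spiralMatrix, dotProduct, Fin.sum_univ_four]
  ring

/-- The divergence of M = g⁻³·f on ℝ⁴ ∖ {0} equals 2/(x₁²+x₂²+x₃²+x₄²)³ > 0. -/
theorem example_divergence_mu_f
    (g : (Fin 4 → ℝ) → ℝ) (hg : g = fun x => x 0 ^ 2 + x 1 ^ 2 + x 2 ^ 2 + x 3 ^ 2)
    (f : (Fin 4 → ℝ) → (Fin 4 → ℝ))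
    (hf : ∀ x, f x = ![ -x 0 - x 1 + x 0 * g x,
                        x 0 - x 1 + x 1 * g x,
                        -x 2 - x 3 + x 2 * g x,
                        x 2 - x 3 + x 3 * g x ])
    (M : (Fin 4 → ℝ) → (Fin 4 → ℝ)) (hM : ∀ x, M x = (g x)⁻¹ ^ 3 • f x) :
    ∀ x : Fin 4 → ℝ, x ≠ 0 →
      (∑ i, fderiv ℝ (fun y => M y i) x (Pi.single i 1))
        = 2 / (x 0 ^ 2 + x 1 ^ 2 + x 2 ^ 2 + x 3 ^ 2) ^ 3 ∧
      0 < ∑ i, fderiv ℝ (fun y => M y i) x (Pi.single i 1) := by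
  intro x hx
  have hg_dot : ∀ y, g y = y ⬝ᵥ y := fun y => by
    simp [hg, dotProduct, Fin.sum_univ_four, sq]
  have hf_spiral : ∀ y, f y = spiralMatrix *ᵥ y + g y • y := fun y => by
    rw [hf]
    ext i
    fin_cases i <;> simp [spiralMatrix, dotProduct, Fin.sum_univ_four] <;> ring
  have hM_dot : M = fun y => (y ⬝ᵥ y)⁻¹ ^ 3 • (spiralMatrix *ᵥ y + (y ⬝ᵥ y) • y) := by
    ext1 y
    rw [hM, hf_spiral, hg_dot]
  have hxx : 0 < x ⬝ᵥ x := by simpa using dotProduct_self_star_pos_iff.mpr hx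
  have hdiv : divergence M x = 2 / (x ⬝ᵥ x) ^ 3 := by
    rw [hM_dot, divergence_inv_dotProduct_self_pow_smul _ _ hx, trace_spiralMatrix,
      dotProduct_spiralMatrix_mulVec, Fintype.card_fin, inv_pow, inv_pow]
    field_simp
    ring
  have hsum : x ⬝ᵥ x = x 0 ^ 2 + x 1 ^ 2 + x 2 ^ 2 + x 3 ^ 2 := by rw [← hg_dot, hg]
  rw [← hsum]
  change divergence M x = _ ∧ 0 < divergence M x
  exact ⟨hdiv, hdiv ▸ by positivity⟩
end

section
/- Let g(x) = x₁² + x₂² + x₃² on ℝ³, n ∈ ℕ, and P(x) = ∏_{k=0}^{n} (g(x) − 2k)(g(x) − 2k − 1). For the vector field f(x) = (x₃ ∏_{k=0}^{n}(g(x) − 2k), x₃ + x₂ P(x), −x₂ − x₁ ∏_{k=0}^{n}(g(x) − 2k)), the derivative of g along f equals 2 x₂² P(x) for all x ∈ ℝ³. Consequently, for each m = 1, …, 2n+1 the sphere {x : g(x) = m} is invariant under the flow of x' = f(x). -/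
/-!
The derivative of `g` along `f` is `2 x₂² P`, and `P = ∏_{j=0}^{2n+1} (g - j)` contains the
factor `g - m`. Along a solution `x`, the function `h = g ∘ x - m` therefore solves a linear
equation `h' = c(t) h` with `c` continuous, so `h · exp (-∫ c)` is constant and `h` vanishes
identically as soon as it vanishes at `0`.
-/

open Finset

theorem Finset.prod_range_two_mul {M : Type*} [CommMonoid M] (f : ℕ → M) (n : ℕ) :
    ∏ j ∈ range (2 * n), f j = ∏ k ∈ range n, f (2 * k) * f (2 * k + 1) := by
  induction n with
  | zero => simp
  | succ n ih => rw [Nat.mul_succ, prod_range_succ, prod_range_succ, prod_range_succ, ih, mul_assoc]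

theorem eq_zero_of_hasDerivAt_eq_mul_self {h c : ℝ → ℝ} (hc : Continuous c)
    (hh : ∀ t, HasDerivAt h (c t * h t) t) {t₀ : ℝ} (ht₀ : h t₀ = 0) (t : ℝ) : h t = 0 := by
  set C : ℝ → ℝ := fun t => ∫ s in t₀..t, c s
  have hC : ∀ t, HasDerivAt C (c t) t := fun t =>
    intervalIntegral.integral_hasDerivAt_right (hc.intervalIntegrable _ _)
      (hc.stronglyMeasurableAtFilter _ _) hc.continuousAt
  have hconst : ∀ s, HasDerivAt (fun t => h t * Real.exp (-C t)) 0 s := fun s =>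
    ((hh s).mul (hC s).neg.exp).congr_deriv (by ring)
  have := is_const_of_deriv_eq_zero (fun s => (hconst s).differentiableAt)
    (fun s => (hconst s).deriv) t t₀
  simpa [ht₀, Real.exp_ne_zero] using this

theorem hasFDerivAt_sum_sq {ι : Type*} [Fintype ι] (y : ι → ℝ) :
    HasFDerivAt (fun x : ι → ℝ => ∑ i, x i ^ 2)
      (∑ i, (2 * y i) • ContinuousLinearMap.proj (R := ℝ) (φ := fun _ : ι => ℝ) i) y := by
  refine HasFDerivAt.fun_sum fun i _ => ?_
  simpa using (hasFDerivAt_apply (𝕜 := ℝ) i y).pow 2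

theorem apply_eq_of_fderiv_apply_eq_mul_sub {E : Type*} [NormedAddCommGroup E] [NormedSpace ℝ E]
    {φ S : E → ℝ} {φ' : E → E →L[ℝ] ℝ} {f : E → E} {c : ℝ}
    (hφ : ∀ y, HasFDerivAt φ (φ' y) y) (hS : Continuous S)
    (hφf : ∀ y, φ' y (f y) = S y * (φ y - c))
    {x : ℝ → E} (hx : ∀ t, HasDerivAt x (f (x t)) t) {t₀ : ℝ} (ht₀ : φ (x t₀) = c) (t : ℝ) :
    φ (x t) = c := by
  have hxc : Continuous x := continuous_iff_continuousAt.2 fun t => (hx t).continuousAt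
  have := eq_zero_of_hasDerivAt_eq_mul_self (h := fun t => φ (x t) - c) (hS.comp hxc)
    (fun t => by simpa [hφf] using ((hφ (x t)).comp_hasDerivAt t (hx t)).sub_const c)
    (sub_eq_zero.2 ht₀) t
  exact sub_eq_zero.1 this

theorem example_2_7_spheres_invariant_general
    (n : ℕ)
    (g : (Fin 3 → ℝ) → ℝ) (hg : g = fun x => x 0 ^ 2 + x 1 ^ 2 + x 2 ^ 2)
    (Q P : (Fin 3 → ℝ) → ℝ)
    (hP : P = fun x => ∏ k ∈ Finset.range (n + 1), (g x - 2 * k) * (g x - 2 * k - 1))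
    (f : (Fin 3 → ℝ) → (Fin 3 → ℝ))
    (hf : ∀ x, f x = ![ x 2 * Q x,
                        x 2 + x 1 * P x,
                        -x 1 - x 0 * Q x ]) :
    (∀ x : Fin 3 → ℝ, 2 * x 0 * f x 0 + 2 * x 1 * f x 1 + 2 * x 2 * f x 2
        = 2 * x 1 ^ 2 * P x) ∧
    (∀ m : ℕ, 1 ≤ m → m ≤ 2 * n + 1 →
      ∀ x : ℝ → (Fin 3 → ℝ), (∀ t, HasDerivAt x (f (x t)) t) →
        g (x 0) = m → ∀ t, g (x t) = m) := by
  have hgf : ∀ y : Fin 3 → ℝ, 2 * y 0 * f y 0 + 2 * y 1 * f y 1 + 2 * y 2 * f y 2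
      = 2 * y 1 ^ 2 * P y := fun y => by
    simp only [hf, Matrix.cons_val_zero, Matrix.cons_val_one, Matrix.cons_val]
    ring
  have hP_range : ∀ y, P y = ∏ j ∈ range (2 * (n + 1)), (g y - j) := fun y => by
    rw [hP, prod_range_two_mul]
    exact prod_congr rfl fun k _ => by push_cast; ring
  have hg_sum : g = fun y => ∑ i, y i ^ 2 := by simp [hg, Fin.sum_univ_three]
  refine ⟨hgf, fun m _ hm x hx hx0 => ?_⟩
  refine apply_eq_of_fderiv_apply_eq_mul_sub (fun y => hg_sum ▸ hasFDerivAt_sum_sq y)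
    (S := fun y => 2 * y 1 ^ 2 * ∏ j ∈ (range (2 * (n + 1))).erase m, (g y - j))
    (by rw [hg]; fun_prop) (fun y => ?_) hx hx0
  have hm_mem : m ∈ range (2 * (n + 1)) := mem_range.2 (by omega)
  simp only [Fin.sum_univ_three, add_apply, smul_apply,
    ContinuousLinearMap.proj_apply, smul_eq_mul]
  rw [hgf, hP_range, ← mul_prod_erase _ _ hm_mem]
  ring

/-- For g(x) = x₁²+x₂²+x₃², P(x) = ∏ₖ(g−2k)(g−2k−1) and the vector field f of
Example 2.7, the derivative of g along f equals 2x₂²P(x); consequently each sphere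
{g = m}, m = 1,…,2n+1, is invariant under the flow of x' = f(x). -/
theorem example_2_7_spheres_invariant
    (n : ℕ)
    (g : (Fin 3 → ℝ) → ℝ) (hg : g = fun x => x 0 ^ 2 + x 1 ^ 2 + x 2 ^ 2)
    (Q P : (Fin 3 → ℝ) → ℝ)
    (hQ : Q = fun x => ∏ k ∈ Finset.range (n + 1), (g x - 2 * k))
    (hP : P = fun x => ∏ k ∈ Finset.range (n + 1), (g x - 2 * k) * (g x - 2 * k - 1))
    (f : (Fin 3 → ℝ) → (Fin 3 → ℝ))
    (hf : ∀ x, f x = ![ x 2 * Q x,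
                        x 2 + x 1 * P x,
                        -x 1 - x 0 * Q x ]) :
    (∀ x : Fin 3 → ℝ, 2 * x 0 * f x 0 + 2 * x 1 * f x 1 + 2 * x 2 * f x 2
        = 2 * x 1 ^ 2 * P x) ∧
    (∀ m : ℕ, 1 ≤ m → m ≤ 2 * n + 1 →
      ∀ x : ℝ → (Fin 3 → ℝ), (∀ t, HasDerivAt x (f (x t)) t) →
        g (x 0) = m → ∀ t, g (x t) = m) :=
  example_2_7_spheres_invariant_general n g hg Q P hP f hf
end
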